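/- For every square matrix C : Matrix (Fin n) (Fin n) ℝ, the set {trace(Q · C) : Q ∈ O(n), i.e. Q a real n × n matrix with Qᵀ·Q = 1} has greatest element ‖C‖_* (the nuclear norm of C): trace(Q·C) ≤ ‖C‖_* for every orthogonal Q, and equality is attained by some orthogonal Q. -/

import Mathlib

open Matrix

/-- The spectral norm (largest singular value) of a real matrix: the `L2` operator norm
of the associated Euclidean linear map. -/
noncomputable def matrixSpectralNorm {m n : ℕ} (A : Matrix (Fin m) (Fin n) ℝ) : ℝ :=
  ‖LinearMap.toContinuousLinearMap (Matrix.toEuclideanLin A)‖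

/-- The positive semidefinite square root of a positive semidefinite matrix (the definition
of `Matrix.PosSemidef.sqrt` in the older Mathlib, which has since been removed). -/
noncomputable def Matrix.PosSemidef.oldSqrt {n : Type*} [Fintype n] [DecidableEq n]
    {A : Matrix n n ℝ} (hA : A.PosSemidef) : Matrix n n ℝ :=
  hA.1.eigenvectorUnitary.1 * diagonal ((↑) ∘ (hA.1.eigenvalues · |>.sqrt))
    * (star hA.1.eigenvectorUnitary : Matrix n n ℝ)

/-- The nuclear norm (sum of singular values) of a real matrix: the trace of the
positive-semidefinite square root of `Aᴴ * A` (over `ℝ`, `Aᴴ = Aᵀ`). -/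
noncomputable def nuclearNorm {m n : ℕ} (A : Matrix (Fin m) (Fin n) ℝ) : ℝ :=
  (Matrix.PosSemidef.oldSqrt (Matrix.posSemidef_conjTranspose_mul_self A)).trace

/-!
Polar decomposition: `S = √(Cᵀ C)` satisfies `Sᵀ S = Cᵀ C`, so `S x ↦ C x` is a well-defined
isometry on the range of `S`; extended to the whole space it is an orthogonal `Q₀` with
`C = Q₀ S`. Hence `tr (Q C) = tr ((Q Q₀) S)`, and for `S = W diag(d) Wᵀ` and orthogonal `R`,
`tr (R S) = ∑ dᵢ (Wᵀ R W)ᵢᵢ ≤ ∑ dᵢ = tr S` since the entries of an orthogonal matrix are at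
most `1`. Equality holds for `Q = Q₀ᵀ`.
-/

open scoped MatrixOrder ComplexOrder

section Isometry

variable {𝕜 V W : Type*} [RCLike 𝕜] [NormedAddCommGroup V] [InnerProductSpace 𝕜 V]

theorem LinearMap.exists_linearIsometry_comp_eq_of_norm_eq [FiniteDimensional 𝕜 V]
    [AddCommGroup W] [Module 𝕜 W] {f g : W →ₗ[𝕜] V} (h : ∀ x, ‖f x‖ = ‖g x‖) :
    ∃ e : V →ₗᵢ[𝕜] V, ∀ x, e (f x) = g x := by
  obtain ⟨s, hs⟩ := f.rangeRestrict.exists_rightInverse_of_surjective f.range_rangeRestrict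
  have hfs (v : range f) : f (s v) = v := congrArg Subtype.val (LinearMap.congr_fun hs v)
  -- `s (f x) - x` lies in `ker f`, which `h` forces into `ker g`.
  have hgs (x : W) : g (s ⟨f x, mem_range_self f x⟩) = g x := by
    rw [← sub_eq_zero, ← map_sub, ← norm_eq_zero, ← h, map_sub, hfs, sub_self, norm_zero]
  let L : range f →ₗᵢ[𝕜] V := ⟨g ∘ₗ s, fun v => by simp [← h, hfs]⟩
  exact ⟨L.extend, fun x => (L.extend_apply ⟨f x, _⟩).trans (hgs x)⟩

theorem ContinuousLinearMap.norm_apply_eq_of_star_mul_self_eq [CompleteSpace V]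
    {T S : V →L[𝕜] V} (h : star T * T = star S * S) (x : V) : ‖T x‖ = ‖S x‖ := by
  rw [star_eq_adjoint, star_eq_adjoint] at h
  rw [apply_norm_eq_sqrt_inner_adjoint_left, apply_norm_eq_sqrt_inner_adjoint_left]
  exact congrArg (fun R : V →L[𝕜] V => √(RCLike.re (inner 𝕜 (R x) x))) h

end Isometry

namespace Matrix

variable {𝕜 ι : Type*} [RCLike 𝕜] [Fintype ι] [DecidableEq ι]

theorem exists_mem_unitaryGroup_mul_eq_of_conjTranspose_mul_self_eq {A B : Matrix ι ι 𝕜}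
    (h : Aᴴ * A = Bᴴ * B) : ∃ U ∈ unitaryGroup ι 𝕜, U * A = B := by
  let T := toEuclideanCLM (𝕜 := 𝕜) (n := ι)
  have hAB : star (T A) * T A = star (T B) * T B := by
    simpa only [← star_eq_conjTranspose, map_mul, map_star] using congrArg T h
  obtain ⟨e, he⟩ := LinearMap.exists_linearIsometry_comp_eq_of_norm_eq
    (f := (T A).toLinearMap) (g := (T B).toLinearMap)
    (ContinuousLinearMap.norm_apply_eq_of_star_mul_self_eq hAB)
  refine ⟨T.symm e.toContinuousLinearMap, ?_, ?_⟩
  · rw [mem_unitaryGroup_iff']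
    apply EquivLike.injective T
    rw [map_mul, map_star, StarAlgEquiv.apply_symm_apply, map_one,
      ContinuousLinearMap.star_eq_adjoint]
    exact e.toContinuousLinearMap.norm_map_iff_adjoint_comp_self.mp e.norm_map
  · apply EquivLike.injective T
    rw [map_mul, StarAlgEquiv.apply_symm_apply]
    ext1 x
    exact he x

theorem re_trace_mul_diagonal_le_of_mem_unitaryGroup {M : Matrix ι ι 𝕜}
    (hM : M ∈ unitaryGroup ι 𝕜) {d : ι → ℝ} (hd : 0 ≤ d) :
    RCLike.re (M * diagonal (RCLike.ofReal ∘ d)).trace ≤ ∑ i, d i := by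
  simp only [trace, diag_apply, mul_diagonal, Function.comp_apply, map_sum, RCLike.re_mul_ofReal]
  refine Finset.sum_le_sum fun i _ => ?_
  calc RCLike.re (M i i) * d i ≤ ‖M i i‖ * d i := by gcongr; exacts [hd i, RCLike.re_le_norm _]
    _ ≤ d i := mul_le_of_le_one_left (hd i) (entry_norm_bound_of_unitary hM i i)

theorem PosSemidef.re_trace_mul_le_of_mem_unitaryGroup {S U : Matrix ι ι 𝕜}
    (hS : S.PosSemidef) (hU : U ∈ unitaryGroup ι 𝕜) :
    RCLike.re (U * S).trace ≤ RCLike.re S.trace := by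
  set W : Matrix ι ι 𝕜 := ↑hS.1.eigenvectorUnitary
  set D : Matrix ι ι 𝕜 := diagonal (RCLike.ofReal ∘ hS.1.eigenvalues)
  have hW : W ∈ unitaryGroup ι 𝕜 := hS.1.eigenvectorUnitary.2
  have hspec : S = W * D * star W := by
    conv_lhs => rw [hS.1.spectral_theorem, Unitary.conjStarAlgAut_apply]
  have htrace : (U * S).trace = (star W * U * W * D).trace := by
    rw [hspec, ← mul_assoc, trace_mul_comm]
    simp only [mul_assoc]
  rw [htrace, hS.1.trace_eq_sum_eigenvalues, map_sum]
  simp only [RCLike.ofReal_re]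
  exact re_trace_mul_diagonal_le_of_mem_unitaryGroup
    (mul_mem (mul_mem (Unitary.star_mem hW) hU) hW) hS.eigenvalues_nonneg

theorem PosSemidef.oldSqrt_eq_sqrt {A : Matrix ι ι ℝ} (hA : A.PosSemidef) :
    hA.oldSqrt = CFC.sqrt A := by
  rw [CFC.sqrt_eq_real_sqrt A hA.nonneg, cfcₙ_eq_cfc, hA.1.cfc_eq]
  rfl

end Matrix

/-- Trace maximization over the orthogonal group: for every square real matrix `C`,
`‖C‖_*` is the greatest element of `{trace (Q * C) : Qᵀ * Q = 1}`. -/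
theorem nuclearNorm_eq_max_trace_orthogonal {n : ℕ} (C : Matrix (Fin n) (Fin n) ℝ) :
    (∀ Q : Matrix (Fin n) (Fin n) ℝ, Qᵀ * Q = 1 → (Q * C).trace ≤ nuclearNorm C) ∧
    (∃ Q : Matrix (Fin n) (Fin n) ℝ, Qᵀ * Q = 1 ∧ (Q * C).trace = nuclearNorm C) := by
  have hCC := posSemidef_conjTranspose_mul_self C
  set S := CFC.sqrt (Cᴴ * C)
  have hS : S.PosSemidef := (CFC.sqrt_nonneg _).posSemidef
  have hnuclear : nuclearNorm C = S.trace := by rw [nuclearNorm, hCC.oldSqrt_eq_sqrt]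
  obtain ⟨Q₀, hQ₀, hQ₀S⟩ : ∃ Q₀ ∈ orthogonalGroup (Fin n) ℝ, Q₀ * S = C :=
    exists_mem_unitaryGroup_mul_eq_of_conjTranspose_mul_self_eq
      (by rw [hS.1.eq, CFC.sqrt_mul_sqrt_self _ hCC.nonneg])
  refine ⟨fun Q hQ => ?_, Q₀ᵀ, ?_, ?_⟩
  · rw [hnuclear, ← hQ₀S, ← mul_assoc]
    simpa only [RCLike.re_to_real] using hS.re_trace_mul_le_of_mem_unitaryGroup
      (mul_mem ((mem_orthogonalGroup_iff' _ _).2 hQ) hQ₀)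
  · rw [transpose_transpose, ← mem_orthogonalGroup_iff]
    exact hQ₀
  · rw [hnuclear, ← hQ₀S, ← mul_assoc, (mem_orthogonalGroup_iff' _ _).1 hQ₀, one_mul]
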